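/- For the explicit midpoint rule applied to the linear homogeneous Hamiltonian system, x₊ = x₋ + 2hHx with H Hamiltonian, the quantity ω(Hx, x₊) equals ω(Hx₋, x): i.e., x^T H^T J x₊ = x₋^T H^T J x. -/

import Mathlib

/-! The defect `ω(Hx, x₊) - ω(Hx₋, x)` splits as `ω(Hx, x₋) - ω(Hx₋, x) + 2h ω(Hx, Hx)`.
The second term vanishes because `ω` is alternating, and the first because `(u, v) ↦ ω(Hu, v)`
is the symmetric form with matrix `Hᵀ J`: the Hamiltonian condition `Hᵀ = J H J` together with
`J² = -1` gives `Hᵀ J = -J H = Jᵀ H = (Hᵀ J)ᵀ`. -/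

open Matrix

noncomputable def Jmat (n : ℕ) : Matrix (Fin n ⊕ Fin n) (Fin n ⊕ Fin n) ℝ :=
  Matrix.fromBlocks 0 1 (-1) 0

namespace Matrix

variable {m R : Type*} [Fintype m] [CommRing R]

theorem dotProduct_mulVec_self_eq_zero_of_transpose_eq_neg [IsAddTorsionFree R]
    {J : Matrix m m R} (hJ : Jᵀ = -J) (u : m → R) : u ⬝ᵥ J *ᵥ u = 0 := by
  have h := dotProduct_transpose_mulVec J u u
  rw [hJ, neg_mulVec, dotProduct_neg] at h
  exact neg_eq_self.mp h

theorem isSymm_transpose_mul_of_transpose_eq_mul_mul [DecidableEq m] {H J : Matrix m m R}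
    (hJt : Jᵀ = -J) (hJJ : J * J = -1) (hH : Hᵀ = J * H * J) : (Hᵀ * J).IsSymm := by
  have hHJ : Hᵀ * J = -(J * H) := by
    rw [hH, Matrix.mul_assoc, Matrix.mul_assoc, hJJ, Matrix.mul_neg, Matrix.mul_one,
      Matrix.mul_neg]
  rw [IsSymm, transpose_mul, transpose_transpose, hJt, hHJ, Matrix.neg_mul]

theorem mulVec_dotProduct_mulVec_comm {H J : Matrix m m R} (hS : (Hᵀ * J).IsSymm)
    (u v : m → R) : H *ᵥ u ⬝ᵥ J *ᵥ v = H *ᵥ v ⬝ᵥ J *ᵥ u := by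
  have hform : ∀ u v : m → R, H *ᵥ u ⬝ᵥ J *ᵥ v = u ⬝ᵥ (Hᵀ * J) *ᵥ v := fun u v => by
    rw [← mulVec_mulVec, dotProduct_transpose_mulVec, dotProduct_comm]
  rw [hform, hform, ← dotProduct_transpose_mulVec, hS.eq]

end Matrix

theorem Jmat_transpose (n : ℕ) : (Jmat n)ᵀ = -Jmat n := by
  simp [Jmat, fromBlocks_transpose, fromBlocks_neg]

theorem Jmat_mul_self (n : ℕ) : Jmat n * Jmat n = -1 := by
  simp [Jmat, fromBlocks_multiply, ← fromBlocks_one, fromBlocks_neg]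

theorem stmt15 (n : ℕ) (H : Matrix (Fin n ⊕ Fin n) (Fin n ⊕ Fin n) ℝ)
    (hH : Hᵀ = Jmat n * H * Jmat n) (h : ℝ) (x xm xp : (Fin n ⊕ Fin n) → ℝ)
    (hxp : xp = xm + (2 * h) • H.mulVec x) :
    H.mulVec x ⬝ᵥ (Jmat n).mulVec xp = H.mulVec xm ⬝ᵥ (Jmat n).mulVec x := by
  have hsymm := isSymm_transpose_mul_of_transpose_eq_mul_mul (Jmat_transpose n)
    (Jmat_mul_self n) hH
  have halt := dotProduct_mulVec_self_eq_zero_of_transpose_eq_neg (Jmat_transpose n) (H *ᵥ x)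
  rw [hxp, mulVec_add, mulVec_smul, dotProduct_add, dotProduct_smul, halt, smul_zero, add_zero,
    mulVec_dotProduct_mulVec_comm hsymm]
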